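/- arXiv:math/0310186 — 3 statements merged into one kernel-verified Lean document; each statement's English description precedes it below -/
import Mathlib

section
/- Let B be a finite-dimensional Poisson algebra over an algebraically closed field k of characteristic 0, and let ξ: B → B be a dilating derivation with constant θ (ξ({a,b}) = {ξ(a),b} + {a,ξ(b)} + θ{a,b}). Write ξ = ξ_s + ξ_n for its Jordan decomposition into semisimple and nilpotent parts. Then ξ_s and ξ_n are derivations of B; ξ_s is dilating with constant θ, and ξ_n preserves the Poisson bracket (is dilating with constant 0). In particular, if θ ≠ 0 and the bracket is nonzero, then ξ_s ≠ 0. -/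
open Module.End in
/-- Key combinatorial lemma: a bilinear map intertwining `ξ` up to a shift `θ` maps
generalized eigenspaces into the shifted generalized eigenspace. -/
lemma dilating_bilinear_mem_maxGenEigenspace
    {k B : Type*} [Field k] [AddCommGroup B] [Module k B]
    (g : B →ₗ[k] B →ₗ[k] B) (ξ : Module.End k B) (θ : k)
    (h : ∀ a b : B, ξ (g a b) = g (ξ a) b + g a (ξ b) + θ • g a b)
    {lam mu : k} {a b : B} (ha : a ∈ ξ.maxGenEigenspace lam)
    (hb : b ∈ ξ.maxGenEigenspace mu) :
    g a b ∈ ξ.maxGenEigenspace (lam + mu + θ) := by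
  rw [mem_maxGenEigenspace] at ha hb ⊢
  obtain ⟨k₁, hk₁⟩ := ha
  obtain ⟨k₂, hk₂⟩ := hb
  suffices H : ∀ n k₁ k₂, k₁ + k₂ = n → ∀ a b : B,
      ((ξ - lam • (1 : Module.End k B)) ^ k₁) a = 0 →
      ((ξ - mu • (1 : Module.End k B)) ^ k₂) b = 0 →
      ((ξ - (lam + mu + θ) • (1 : Module.End k B)) ^ n) (g a b) = 0 by
    exact ⟨k₁ + k₂, H (k₁ + k₂) k₁ k₂ rfl a b hk₁ hk₂⟩
  intro n
  induction n with
  | zero =>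
    rintro k₁ k₂ hk a b ha hb
    obtain ⟨rfl, rfl⟩ : k₁ = 0 ∧ k₂ = 0 := by omega
    simp only [pow_zero, Module.End.one_apply] at ha ⊢
    simp [ha]
  | succ n ih =>
    rintro k₁ k₂ hk a b ha hb
    rcases Nat.eq_zero_or_pos k₁ with rfl | hpos₁
    · simp only [pow_zero, Module.End.one_apply] at ha
      simp [ha]
    rcases Nat.eq_zero_or_pos k₂ with rfl | hpos₂
    · simp only [pow_zero, Module.End.one_apply] at hb
      simp [hb]
    obtain ⟨k₁', rfl⟩ : ∃ m, k₁ = m + 1 := ⟨k₁ - 1, by omega⟩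
    obtain ⟨k₂', rfl⟩ : ∃ m, k₂ = m + 1 := ⟨k₂ - 1, by omega⟩
    have key : (ξ - (lam + mu + θ) • (1 : Module.End k B)) (g a b)
        = g ((ξ - lam • (1 : Module.End k B)) a) b
          + g a ((ξ - mu • (1 : Module.End k B)) b) := by
      simp only [LinearMap.sub_apply, LinearMap.smul_apply, Module.End.one_apply, h a b,
        map_sub, map_smul, LinearMap.sub_apply, LinearMap.smul_apply, map_add]
      module
    rw [pow_succ, Module.End.mul_apply, key, map_add]
    have h1 := ih k₁' (k₂' + 1) (by omega) ((ξ - lam • (1 : Module.End k B)) a) b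
      (by rw [← Module.End.mul_apply, ← pow_succ]; exact ha) hb
    have h2 := ih (k₁' + 1) k₂' (by omega) a ((ξ - mu • (1 : Module.End k B)) b)
      ha (by rw [← Module.End.mul_apply, ← pow_succ]; exact hb)
    rw [h1, h2, add_zero]

/-- Jordan decomposition of a dilating derivation of a finite-dimensional Poisson
algebra: the semisimple part is a dilating derivation with the same constant, the
nilpotent part is a derivation preserving the bracket; if the constant is nonzero and
the bracket is nonzero, the semisimple part is nonzero. -/
theorem jordan_decomposition_of_dilating_derivation
    {k B : Type*} [Field k] [CharZero k] [IsAlgClosed k]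
    [CommRing B] [Algebra k B] [FiniteDimensional k B]
    (br : B →ₗ[k] B →ₗ[k] B)
    (skew : ∀ a b : B, br a b = - br b a)
    (leibniz : ∀ a b c : B, br a (b * c) = br a b * c + br a c * b)
    (jacobi : ∀ a b c : B, br a (br b c) + br b (br c a) + br c (br a b) = 0)
    (θ : k) (ξ ξs ξn : Module.End k B)
    (hder : ∀ a b : B, ξ (a * b) = ξ a * b + a * ξ b)
    (hdil : ∀ a b : B, ξ (br a b) = br (ξ a) b + br a (ξ b) + θ • br a b)
    (hsum : ξ = ξs + ξn)
    (hss : ξs.IsSemisimple)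
    (hnil : IsNilpotent ξn)
    (hcomm : Commute ξs ξn) :
    (∀ a b : B, ξs (a * b) = ξs a * b + a * ξs b) ∧
    (∀ a b : B, ξn (a * b) = ξn a * b + a * ξn b) ∧
    (∀ a b : B, ξs (br a b) = br (ξs a) b + br a (ξs b) + θ • br a b) ∧
    (∀ a b : B, ξn (br a b) = br (ξn a) b + br a (ξn b)) ∧
    (θ ≠ 0 → (∃ a b : B, br a b ≠ 0) → ξs ≠ 0) := by
  have hcommξ : Commute ξ ξs := by
    rw [hsum]; exact (Commute.refl ξs).add_left hcomm.symm
  have hnil' : IsNilpotent (ξ - ξs) := by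
    rwa [hsum, add_sub_cancel_left]
  -- ξs acts as μ • id on each generalized eigenspace of ξ
  have hS : ∀ (mu : k) (m : B), m ∈ ξ.maxGenEigenspace mu → ξs m = mu • m := fun mu m hm ↦
    Module.End.apply_eq_of_mem_of_comm_of_isFinitelySemisimple_of_isNil hm hcommξ
      hss.isFinitelySemisimple hnil'
  have htop : ⨆ mu : k, ξ.maxGenEigenspace mu = ⊤ :=
    Module.End.iSup_maxGenEigenspace_eq_top ξ
  -- the multiplication map as a bilinear map
  let mulmap : B →ₗ[k] B →ₗ[k] B := LinearMap.mul k B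
  have hmul : ∀ a b : B, ξ (mulmap a b) = mulmap (ξ a) b + mulmap a (ξ b)
      + (0 : k) • mulmap a b := by
    intro a b; simp only [mulmap, LinearMap.mul_apply', zero_smul, add_zero]; exact hder a b
  -- semisimple part is a derivation
  have hsder : ∀ a b : B, ξs (a * b) = ξs a * b + a * ξs b := by
    intro a b
    have ha : a ∈ ⨆ mu : k, ξ.maxGenEigenspace mu := htop ▸ Submodule.mem_top
    induction ha using Submodule.iSup_induction' with
    | mem lam a ha =>
      have hb : b ∈ ⨆ mu : k, ξ.maxGenEigenspace mu := htop ▸ Submodule.mem_top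
      induction hb using Submodule.iSup_induction' with
      | mem mu b hb =>
        have hab := dilating_bilinear_mem_maxGenEigenspace mulmap ξ 0 hmul ha hb
        rw [add_zero] at hab
        rw [show (mulmap a) b = a * b from rfl] at hab
        rw [hS lam a ha, hS mu b hb, hS (lam + mu) _ hab]
        simp only [smul_mul_assoc, mul_smul_comm, add_smul]
      | zero => simp
      | add b₁ b₂ _ _ h₁ h₂ => simp only [mul_add, map_add, h₁, h₂]; ring
    | zero => simp
    | add a₁ a₂ _ _ h₁ h₂ => simp only [add_mul, map_add, h₁, h₂]; ring
  -- semisimple part is dilating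
  have hsdil : ∀ a b : B, ξs (br a b) = br (ξs a) b + br a (ξs b) + θ • br a b := by
    intro a b
    have ha : a ∈ ⨆ mu : k, ξ.maxGenEigenspace mu := htop ▸ Submodule.mem_top
    induction ha using Submodule.iSup_induction' with
    | mem lam a ha =>
      have hb : b ∈ ⨆ mu : k, ξ.maxGenEigenspace mu := htop ▸ Submodule.mem_top
      induction hb using Submodule.iSup_induction' with
      | mem mu b hb =>
        have hab := dilating_bilinear_mem_maxGenEigenspace br ξ θ hdil ha hb
        rw [hS lam a ha, hS mu b hb, hS (lam + mu + θ) _ hab]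
        simp only [map_smul, LinearMap.smul_apply, add_smul]
      | zero => simp
      | add b₁ b₂ _ _ h₁ h₂ =>
        simp only [map_add, h₁, h₂, LinearMap.add_apply, smul_add]; abel
    | zero => simp
    | add a₁ a₂ _ _ h₁ h₂ =>
      simp only [map_add, h₁, h₂, LinearMap.add_apply, smul_add]; abel
  have hnval : ∀ m : B, ξn m = ξ m - ξs m := by
    intro m; rw [hsum]; simp [LinearMap.add_apply]
  refine ⟨hsder, ?_, hsdil, ?_, ?_⟩
  · intro a b
    rw [hnval, hnval, hnval, hder, hsder]; ring
  · intro a b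
    rw [hnval, hnval, hnval, hdil a b, hsdil a b]
    simp only [map_sub, LinearMap.sub_apply]
    abel
  · rintro hθ ⟨a, b, hab⟩ hzero
    apply hab
    have := hsdil a b
    rw [hzero] at this
    simp only [LinearMap.zero_apply, map_zero, LinearMap.zero_apply, zero_add] at this
    rcases smul_eq_zero.mp this.symm with h | h
    · exact absurd h hθ
    · exact h
end

section
/- Let N be a k-vector space (char k = 0) with operators x, ξ satisfying xξ − ξx = id. If m ∈ ker(x^p) for some p ≥ 2, then m − (1/(p−1)!)·ξ^{p−1}(x^{p−1}(m)) ∈ ker(x^{p−1}), and x^{p−1}(m) ∈ ker x. -/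
private lemma weyl_comm_pow {k N : Type*} [Field k] [AddCommGroup N] [Module k N]
    (x ξ : Module.End k N) (hrel : x * ξ - ξ * x = 1) :
    ∀ n : ℕ, x * ξ ^ (n + 1) = ξ ^ (n + 1) * x + ((n + 1 : ℕ) : k) • ξ ^ n := by
  intro n
  induction n with
  | zero => simp [pow_one]; linear_combination (norm := noncomm_ring) hrel
  | succ n ih =>
    have : x * ξ ^ (n + 2) = (x * ξ ^ (n + 1)) * ξ := by
      rw [mul_assoc, ← pow_succ]
    rw [this, ih, add_mul, smul_mul_assoc, ← pow_succ, mul_assoc]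
    have hxi : x * ξ = ξ * x + 1 := by rw [← hrel]; noncomm_ring
    have h3 : ξ ^ (n + 1) * (x * ξ) = ξ ^ (n + 2) * x + ξ ^ (n + 1) := by
      rw [hxi, mul_add, ← mul_assoc, ← pow_succ, mul_one]
    rw [h3, show n + 1 + 1 = n + 2 from rfl]
    push_cast
    module

private lemma weyl_key {k N : Type*} [Field k] [CharZero k] [AddCommGroup N] [Module k N]
    (x ξ : Module.End k N) (hrel : x * ξ - ξ * x = 1) :
    ∀ n : ℕ, ∀ v : N, x v = 0 → (x ^ n) ((ξ ^ n) v) = ((Nat.factorial n : k)) • v := by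
  intro n
  induction n with
  | zero => intro v hv; simp
  | succ n ih =>
    intro v hv
    have h1 : (x ^ (n + 1)) ((ξ ^ (n + 1)) v) = (x ^ n) (x ((ξ ^ (n + 1)) v)) := by
      rw [pow_succ]; rfl
    have h2 : x ((ξ ^ (n + 1)) v) = ((n + 1 : ℕ) : k) • (ξ ^ n) v := by
      have := congrFun (congrArg DFunLike.coe (weyl_comm_pow x ξ hrel n)) v
      simpa [hv] using this
    rw [h1, h2, map_smul, ih _ hv, smul_smul, Nat.factorial_succ]
    push_cast
    ring_nf

/-- Key induction step of Lemma 3.2: if `xξ - ξx = 1` and `x^p m = 0` with `p ≥ 2`,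
then `m - (1/(p-1)!)·ξ^{p-1}(x^{p-1} m)` is killed by `x^{p-1}`, and `x^{p-1} m` is
killed by `x`. -/
theorem weyl_induction_step
    {k N : Type*} [Field k] [CharZero k] [AddCommGroup N] [Module k N]
    (x ξ : Module.End k N)
    (hrel : x * ξ - ξ * x = 1)
    (p : ℕ) (hp : 2 ≤ p) (m : N) (hm : (x ^ p) m = 0) :
    (x ^ (p - 1)) (m - ((Nat.factorial (p - 1) : k))⁻¹ •
        ((ξ ^ (p - 1)) ((x ^ (p - 1)) m))) = 0 ∧
    x ((x ^ (p - 1)) m) = 0 := by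
  have hp1 : p - 1 + 1 = p := Nat.sub_add_cancel (by omega : 1 ≤ p)
  have hx : x ((x ^ (p - 1)) m) = 0 := by
    have : (x ^ p) m = x ((x ^ (p - 1)) m) := by
      rw [← hp1, pow_succ']; rfl
    rw [← this, hm]
  refine ⟨?_, hx⟩
  rw [map_sub, map_smul, weyl_key x ξ hrel (p - 1) _ hx, smul_smul,
    inv_mul_cancel₀ (Nat.cast_ne_zero.mpr (Nat.factorial_ne_zero (p - 1))), one_smul, sub_self]
end

section
/- Let A be a Noetherian commutative ring with a Poisson bracket, and let I ⊆ A be a Poisson ideal. Then every minimal prime over I is a Poisson ideal. In particular (the case I = 0): every minimal prime of a Noetherian Poisson algebra is a Poisson ideal, so every irreducible component of a Noetherian Poisson scheme is a Poisson subscheme. -/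
/-!
Fix `a` and consider the derivation `D = {a, -}`; a Poisson ideal is `D`-stable for every `a`.
If `p` lies in a minimal prime `P` over `I`, localizing at `P` gives `s ∉ P` with `s * p ^ n ∈ I`.
Applying `D` to `s * p ^ (k + 1) ∈ I`, multiplying by `s` and dividing by `k + 1` yields
`s² · D p · p ^ k ∈ I`; so if `D p ∉ P`, the exponent drops by one while the cofactor stays
outside `P`, and descending to `n = 0` puts an element outside `P` into `I ⊆ P`.
-/

theorem Ideal.exists_mul_pow_mem_of_mem_minimalPrimes {R : Type*} [CommSemiring R]
    {I P : Ideal R} (hP : P ∈ I.minimalPrimes) {x : R} (hx : x ∈ P) :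
    ∃ n : ℕ, ∃ s ∉ P, s * x ^ n ∈ I := by
  have := hP.isPrime
  have hx' : algebraMap R (Localization.AtPrime P) x ∈ (I.map (algebraMap _ _)).radical := by
    rw [IsLocalization.AtPrime.radical_map_of_mem_minimalPrimes _ P I hP]
    exact Ideal.mem_map_of_mem _ hx
  obtain ⟨n, hn⟩ := hx'
  rw [← map_pow, IsLocalization.algebraMap_mem_map_algebraMap_iff P.primeCompl] at hn
  obtain ⟨s, hs, hsx⟩ := hn
  exact ⟨n, s, hs, hsx⟩

theorem Ideal.mem_of_nsmul_mem {A : Type*} [CommRing A] [Algebra ℚ A] (I : Ideal A)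
    {n : ℕ} (hn : n ≠ 0) {y : A} (hy : n • y ∈ I) : y ∈ I := by
  rw [← Nat.cast_smul_eq_nsmul ℚ] at hy
  simpa [inv_smul_smul₀ (Nat.cast_ne_zero.mpr hn : (n : ℚ) ≠ 0)]
    using I.smul_of_tower_mem (n : ℚ)⁻¹ hy

namespace Derivation

variable {R A : Type*} [CommSemiring R] [CommRing A] [Algebra R A] [Algebra ℚ A]
  (D : Derivation R A A) {I : Ideal A}

theorem mul_self_mul_mul_pow_mem_of_mul_pow_succ_mem (hI : ∀ i ∈ I, D i ∈ I) {x p : A} {k : ℕ}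
    (h : x * p ^ (k + 1) ∈ I) : x * x * D p * p ^ k ∈ I := by
  have hD : x * D (x * p ^ (k + 1)) - D x * (x * p ^ (k + 1)) ∈ I :=
    I.sub_mem (I.mul_mem_left _ (hI _ h)) (I.mul_mem_left _ h)
  refine I.mem_of_nsmul_mem k.succ_ne_zero ?_
  convert hD using 1
  simp only [leibniz, leibniz_pow, smul_eq_mul, nsmul_eq_mul, Nat.add_sub_cancel]
  ring

theorem mem_of_mem_minimalPrimes (hI : ∀ i ∈ I, D i ∈ I) {P : Ideal A}
    (hP : P ∈ I.minimalPrimes) {p : A} (hp : p ∈ P) : D p ∈ P := by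
  have hPprime := hP.isPrime
  obtain ⟨n, x, hxP, hx⟩ := Ideal.exists_mul_pow_mem_of_mem_minimalPrimes hP hp
  induction n generalizing x with
  | zero => exact absurd (hP.le (by simpa using hx)) hxP
  | succ k ih =>
    by_contra hDp
    exact hDp <| ih (x * x * D p) (hPprime.mul_notMem (hPprime.mul_notMem hxP hxP) hDp)
      (D.mul_self_mul_mul_pow_mem_of_mul_pow_succ_mem hI hx)

end Derivation

theorem minimal_primes_are_poisson_general
    {A : Type*} [CommRing A] [Algebra ℚ A]
    (br : A →ₗ[ℚ] A →ₗ[ℚ] A)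
    (skew : ∀ a b : A, br a b = - br b a)
    (leibniz : ∀ a b c : A, br a (b * c) = br a b * c + br a c * b)
    (I : Ideal A)
    (hI : ∀ i ∈ I, ∀ a : A, br i a ∈ I) :
    ∀ P ∈ I.minimalPrimes, ∀ p ∈ P, ∀ a : A, br p a ∈ P := by
  intro P hP p hp a
  let D : Derivation ℚ A A := Derivation.mk' (br a) fun b c ↦ by
    rw [leibniz, smul_eq_mul, smul_eq_mul]
    ring
  have hDI : ∀ i ∈ I, D i ∈ I := fun i hi ↦ by
    simpa [D, skew a i] using I.neg_mem (hI i hi a)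
  simpa [D, skew a p] using P.neg_mem (D.mem_of_mem_minimalPrimes hDI hP hp)

/-- In a Noetherian Poisson algebra over ℚ, every minimal prime over a Poisson ideal
`I` is a Poisson ideal.  In particular (taking `I = 0`), every minimal prime is a
Poisson ideal, so every irreducible component of a Noetherian Poisson scheme is a
Poisson subscheme. -/
theorem minimal_primes_are_poisson
    {A : Type*} [CommRing A] [Algebra ℚ A] [IsNoetherianRing A]
    (br : A →ₗ[ℚ] A →ₗ[ℚ] A)
    (skew : ∀ a b : A, br a b = - br b a)
    (leibniz : ∀ a b c : A, br a (b * c) = br a b * c + br a c * b)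
    (jacobi : ∀ a b c : A, br a (br b c) + br b (br c a) + br c (br a b) = 0)
    (I : Ideal A)
    (hI : ∀ i ∈ I, ∀ a : A, br i a ∈ I) :
    ∀ P ∈ I.minimalPrimes, ∀ p ∈ P, ∀ a : A, br p a ∈ P :=
  minimal_primes_are_poisson_general br skew leibniz I hI
end
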